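/- arXiv:2410.02615 — 2 statements merged into one kernel-verified Lean document; each statement's English description precedes it below -/
import Mathlib

section
/- For any t, u ∈ [0,1], the interpolated structured graphs μ_t and μ_u (linearly interpolating features along an optimal alignment and using the interpolated structure distance (1−t)d_{s0} ⊕ t d_{s1}) satisfy d_SGA(μ_u, μ_t) ≤ |t − u| · d_SGA(μ_0, μ_1). In particular, linear feature interpolation along an optimal matching yields a path of at most proportional length. -/
open scoped BigOperators

/-- Cost of aligning structured graphs given by features in Euclidean space and
structure-distance matrices, via permutation `σ`. -/
noncomputable def alignCostM {M d : ℕ}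
    (f1 : Fin M → EuclideanSpace ℝ (Fin d)) (D1 : Fin M → Fin M → ℝ)
    (f2 : Fin M → EuclideanSpace ℝ (Fin d)) (D2 : Fin M → Fin M → ℝ)
    (σ : Equiv.Perm (Fin M)) : ℝ :=
  (∑ i, dist (f1 i) (f2 (σ i))) + ∑ i, ∑ k, |D1 i k - D2 (σ i) (σ k)|

/-- Second-order graph alignment discrepancy (matrix form). -/
noncomputable def dSGAM {M d : ℕ}
    (f1 : Fin M → EuclideanSpace ℝ (Fin d)) (D1 : Fin M → Fin M → ℝ)
    (f2 : Fin M → EuclideanSpace ℝ (Fin d)) (D2 : Fin M → Fin M → ℝ) : ℝ :=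
  ⨅ σ : Equiv.Perm (Fin M), alignCostM f1 D1 f2 D2 σ

/-!
Proof idea: align `μ_u` with `μ_t` by the identity permutation. Both the features and the
structure distances of `μ_t` move along affine segments in `t`, so every term of this alignment
cost is `|t - u|` times the corresponding term of the cost of `σ` between `G₀` and `G₁`, which is
`d_SGA(G₀, G₁)` by optimality of `σ`.
-/

open AffineMap

section

variable {M d : ℕ}

theorem alignCostM_nonneg (f1 : Fin M → EuclideanSpace ℝ (Fin d)) (D1 : Fin M → Fin M → ℝ)
    (f2 : Fin M → EuclideanSpace ℝ (Fin d)) (D2 : Fin M → Fin M → ℝ) (σ : Equiv.Perm (Fin M)) :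
    0 ≤ alignCostM f1 D1 f2 D2 σ := by
  unfold alignCostM
  positivity

theorem dSGAM_le_alignCostM (f1 : Fin M → EuclideanSpace ℝ (Fin d)) (D1 : Fin M → Fin M → ℝ)
    (f2 : Fin M → EuclideanSpace ℝ (Fin d)) (D2 : Fin M → Fin M → ℝ) (σ : Equiv.Perm (Fin M)) :
    dSGAM f1 D1 f2 D2 ≤ alignCostM f1 D1 f2 D2 σ :=
  ciInf_le ⟨0, by rintro _ ⟨τ, rfl⟩; exact alignCostM_nonneg f1 D1 f2 D2 τ⟩ σ

theorem alignCostM_refl_lineMap (f0 f1 : Fin M → EuclideanSpace ℝ (Fin d))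
    (D0 D1 : Fin M → Fin M → ℝ) (σ : Equiv.Perm (Fin M)) (u t : ℝ) :
    alignCostM (fun i => lineMap (f0 i) (f1 (σ i)) u)
        (fun i k => lineMap (D0 i k) (D1 (σ i) (σ k)) u)
        (fun i => lineMap (f0 i) (f1 (σ i)) t)
        (fun i k => lineMap (D0 i k) (D1 (σ i) (σ k)) t) (Equiv.refl _)
      = |t - u| * alignCostM f0 D0 f1 D1 σ := by
  simp only [alignCostM, Equiv.refl_apply, ← Real.dist_eq, dist_lineMap_lineMap,
    ← Finset.mul_sum, mul_add]
  rw [dist_comm, Real.dist_eq]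

end

theorem dSGA_interp_le_general {M d : ℕ} {S0 S1 : Type*} [MetricSpace S0] [MetricSpace S1]
    (f0 f1 : Fin M → EuclideanSpace ℝ (Fin d))
    (s0 : Fin M → S0) (s1 : Fin M → S1)
    (σ : Equiv.Perm (Fin M))
    (hopt : alignCostM f0 (fun i k => dist (s0 i) (s0 k))
        f1 (fun i k => dist (s1 i) (s1 k)) σ
      = dSGAM f0 (fun i k => dist (s0 i) (s0 k)) f1 (fun i k => dist (s1 i) (s1 k)))
    (μf : ℝ → Fin M → EuclideanSpace ℝ (Fin d))
    (μD : ℝ → Fin M → Fin M → ℝ)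
    (hμf : ∀ t i, μf t i = (1 - t) • f0 i + t • f1 (σ i))
    (hμD : ∀ t i k,
      μD t i k = (1 - t) * dist (s0 i) (s0 k) + t * dist (s1 (σ i)) (s1 (σ k)))
    (u t : ℝ) :
    dSGAM (μf u) (μD u) (μf t) (μD t)
      ≤ |t - u| *
        dSGAM f0 (fun i k => dist (s0 i) (s0 k)) f1 (fun i k => dist (s1 i) (s1 k)) := by
  have hμf_lineMap : ∀ t, μf t = fun i => lineMap (f0 i) (f1 (σ i)) t := fun t =>
    funext fun i => by rw [hμf, lineMap_apply_module]
  have hμD_lineMap : ∀ t, μD t = fun i k =>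
      lineMap (dist (s0 i) (s0 k)) (dist (s1 (σ i)) (s1 (σ k))) t := fun t =>
    funext fun i => funext fun k => by rw [hμD, lineMap_apply_module, smul_eq_mul, smul_eq_mul]
  calc dSGAM (μf u) (μD u) (μf t) (μD t)
      ≤ alignCostM (μf u) (μD u) (μf t) (μD t) (Equiv.refl _) := dSGAM_le_alignCostM _ _ _ _ _
    _ = |t - u| * alignCostM f0 (fun i k => dist (s0 i) (s0 k))
          f1 (fun i k => dist (s1 i) (s1 k)) σ := by
      rw [hμf_lineMap, hμf_lineMap, hμD_lineMap, hμD_lineMap]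
      exact alignCostM_refl_lineMap f0 f1 _ (fun i k => dist (s1 i) (s1 k)) σ u t
    _ = _ := by rw [hopt]

/-- interpolated structured graphs along an optimal alignment satisfy
d_SGA(μ_u, μ_t) ≤ |t − u| · d_SGA(μ_0, μ_1). -/
theorem dSGA_interp_le {M d : ℕ} {S0 S1 : Type*} [MetricSpace S0] [MetricSpace S1]
    (f0 f1 : Fin M → EuclideanSpace ℝ (Fin d))
    (s0 : Fin M → S0) (s1 : Fin M → S1)
    (σ : Equiv.Perm (Fin M))
    (hopt : alignCostM f0 (fun i k => dist (s0 i) (s0 k))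
        f1 (fun i k => dist (s1 i) (s1 k)) σ
      = dSGAM f0 (fun i k => dist (s0 i) (s0 k)) f1 (fun i k => dist (s1 i) (s1 k)))
    (μf : ℝ → Fin M → EuclideanSpace ℝ (Fin d))
    (μD : ℝ → Fin M → Fin M → ℝ)
    (hμf : ∀ t i, μf t i = (1 - t) • f0 i + t • f1 (σ i))
    (hμD : ∀ t i k,
      μD t i k = (1 - t) * dist (s0 i) (s0 k) + t * dist (s1 (σ i)) (s1 (σ k)))
    (u t : ℝ) (hu : u ∈ Set.Icc (0:ℝ) 1) (ht : t ∈ Set.Icc (0:ℝ) 1) :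
    dSGAM (μf u) (μD u) (μf t) (μD t)
      ≤ |t - u| *
        dSGAM f0 (fun i k => dist (s0 i) (s0 k)) f1 (fun i k => dist (s1 i) (s1 k)) :=
  dSGA_interp_le_general f0 f1 s0 s1 σ hopt μf μD hμf hμD u t
end

section
/- The interpolated structured graph path t ↦ μ_t along an optimal alignment is a constant speed geodesic: d_SGA(μ_u, μ_t) = |t − u| · d_SGA(μ_0, μ_1) for all u, t ∈ [0,1]. -/
open scoped BigOperators

/-!
Along the optimal alignment `σ`, the cost of aligning `μ_u` with `μ_t` by the identity is
exactly `|t - u|` times the optimal cost `e = d_SGA(G0, G1)`, since all features and structure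
distances interpolate linearly; hence `d_SGA(μ_u, μ_t) ≤ |t - u| e`. As `μ_1` is `G1` relabelled
by `σ`, also `d_SGA(μ_0, μ_1) = e`. Since `d_SGA` is symmetric and satisfies the triangle
inequality, `e ≤ d_SGA(μ_0, μ_u) + d_SGA(μ_u, μ_t) + d_SGA(μ_t, μ_1)` for `u ≤ t`, and the upper
bounds on the two outer terms force equality in the middle one.
-/

open Finset

theorem Equiv.Perm.sum_sum_comp {ι β : Type*} [Fintype ι] [AddCommMonoid β]
    (σ : Equiv.Perm ι) (g : ι → ι → β) : ∑ i, ∑ k, g (σ i) (σ k) = ∑ i, ∑ k, g i k :=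
  (sum_congr rfl fun i _ => Equiv.sum_comp σ (g (σ i))).trans
    (Equiv.sum_comp σ fun i => ∑ k, g i k)

theorem eq_abs_sub_mul_of_le_abs_sub_mul {α : Type*} (ρ : α → α → ℝ)
    (comm : ∀ x y, ρ x y = ρ y x) (triangle : ∀ x y z, ρ x z ≤ ρ x y + ρ y z) (γ : ℝ → α)
    (hγ : ∀ a ∈ Set.Icc (0 : ℝ) 1, ∀ b ∈ Set.Icc (0 : ℝ) 1,
      ρ (γ a) (γ b) ≤ |b - a| * ρ (γ 0) (γ 1))
    {u t : ℝ} (hu : u ∈ Set.Icc (0 : ℝ) 1) (ht : t ∈ Set.Icc (0 : ℝ) 1) :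
    ρ (γ u) (γ t) = |t - u| * ρ (γ 0) (γ 1) := by
  wlog hut : u ≤ t generalizing u t
  · rw [comm, this ht hu (le_of_not_ge hut), abs_sub_comm]
  have head := hγ 0 (Set.left_mem_Icc.2 zero_le_one) u hu
  have tail := hγ t ht 1 (Set.right_mem_Icc.2 zero_le_one)
  have middle := hγ u hu t ht
  rw [sub_zero, abs_of_nonneg hu.1] at head
  rw [abs_of_nonneg (sub_nonneg.2 ht.2)] at tail
  rw [abs_of_nonneg (sub_nonneg.2 hut)] at middle ⊢
  have := (triangle (γ 0) (γ u) (γ 1)).trans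
    (add_le_add_right (triangle (γ u) (γ t) (γ 1)) _)
  linarith

section Alignment

variable {M d : ℕ} (f : Fin M → EuclideanSpace ℝ (Fin d)) (D : Fin M → Fin M → ℝ)
  (f' : Fin M → EuclideanSpace ℝ (Fin d)) (D' : Fin M → Fin M → ℝ)
  (f'' : Fin M → EuclideanSpace ℝ (Fin d)) (D'' : Fin M → Fin M → ℝ)

theorem dSGAM_le_alignCostM_s6 (σ : Equiv.Perm (Fin M)) :
    dSGAM f D f' D' ≤ alignCostM f D f' D' σ :=
  ciInf_le (Set.finite_range _).bddBelow σ

theorem exists_alignCostM_eq_dSGAM : ∃ σ, alignCostM f D f' D' σ = dSGAM f D f' D' := by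
  obtain ⟨σ, hσ⟩ := Finite.exists_min (alignCostM f D f' D')
  exact ⟨σ, le_antisymm (le_ciInf hσ) (dSGAM_le_alignCostM_s6 f D f' D' σ)⟩

theorem alignCostM_comp_perm (σ τ : Equiv.Perm (Fin M)) :
    alignCostM f D (fun i => f' (σ i)) (fun i k => D' (σ i) (σ k)) τ =
      alignCostM f D f' D' (τ.trans σ) :=
  rfl

theorem dSGAM_comp_perm (σ : Equiv.Perm (Fin M)) :
    dSGAM f D (fun i => f' (σ i)) (fun i k => D' (σ i) (σ k)) = dSGAM f D f' D' :=
  (Equiv.mulLeft σ).iInf_comp (g := alignCostM f D f' D')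

theorem alignCostM_perm_comp (σ τ : Equiv.Perm (Fin M)) :
    alignCostM (fun i => f (σ i)) (fun i k => D (σ i) (σ k)) f' D' (σ.trans τ) =
      alignCostM f D f' D' τ := by
  unfold alignCostM
  congr 1
  · exact Equiv.sum_comp σ fun i => dist (f i) (f' (τ i))
  · exact σ.sum_sum_comp fun i k => |D i k - D' (τ i) (τ k)|

theorem alignCostM_symm (σ : Equiv.Perm (Fin M)) :
    alignCostM f' D' f D σ⁻¹ = alignCostM f D f' D' σ := by
  rw [← alignCostM_perm_comp f' D' f D σ, Equiv.Perm.inv_def, Equiv.self_trans_symm]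
  unfold alignCostM
  simp only [Equiv.refl_apply, dist_comm (f' _), abs_sub_comm (D' _ _)]

theorem dSGAM_comm : dSGAM f D f' D' = dSGAM f' D' f D :=
  le_antisymm (comm_le f' D' f D) (comm_le f D f' D')
where
  comm_le (g E g' E') : dSGAM g' E' g E ≤ dSGAM g E g' E' := by
    obtain ⟨σ, hσ⟩ := exists_alignCostM_eq_dSGAM g E g' E'
    exact hσ ▸ alignCostM_symm g E g' E' σ ▸ dSGAM_le_alignCostM_s6 g' E' g E σ⁻¹

theorem alignCostM_trans_le (σ τ : Equiv.Perm (Fin M)) :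
    alignCostM f D f'' D'' (σ.trans τ) ≤ alignCostM f D f' D' σ + alignCostM f' D' f'' D'' τ := by
  rw [← alignCostM_perm_comp f' D' f'' D'' σ]
  unfold alignCostM
  simp only [Equiv.trans_apply]
  rw [add_add_add_comm]
  refine add_le_add ?_ ?_ <;> rw [← sum_add_distrib] <;> refine sum_le_sum fun i _ => ?_
  · exact dist_triangle _ _ _
  · rw [← sum_add_distrib]
    exact sum_le_sum fun k _ => abs_sub_le _ _ _

theorem dSGAM_triangle : dSGAM f D f'' D'' ≤ dSGAM f D f' D' + dSGAM f' D' f'' D'' := by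
  obtain ⟨σ, hσ⟩ := exists_alignCostM_eq_dSGAM f D f' D'
  obtain ⟨τ, hτ⟩ := exists_alignCostM_eq_dSGAM f' D' f'' D''
  rw [← hσ, ← hτ]
  exact (dSGAM_le_alignCostM_s6 _ _ _ _ _).trans (alignCostM_trans_le f D f' D' f'' D'' σ τ)

theorem alignCostM_interp_refl (u t : ℝ) :
    alignCostM (fun i => (1 - u) • f i + u • f' i) (fun i k => (1 - u) * D i k + u * D' i k)
      (fun i => (1 - t) • f i + t • f' i) (fun i k => (1 - t) * D i k + t * D' i k)
      (Equiv.refl _) = |t - u| * alignCostM f D f' D' (Equiv.refl _) := by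
  have hf (i : Fin M) : dist ((1 - u) • f i + u • f' i) ((1 - t) • f i + t • f' i)
      = |t - u| * dist (f i) (f' i) := by
    rw [dist_eq_norm, dist_eq_norm, ← Real.norm_eq_abs, ← norm_smul]
    congr 1
    module
  have hD (i k : Fin M) : |(1 - u) * D i k + u * D' i k - ((1 - t) * D i k + t * D' i k)|
      = |t - u| * |D i k - D' i k| := by
    rw [← abs_mul]
    ring_nf
  simp only [alignCostM, Equiv.refl_apply, hf, hD, ← mul_sum, mul_add]

end Alignment

/-- the interpolated path along an optimal alignment is a constant
speed geodesic: d_SGA(μ_u, μ_t) = |t − u| · d_SGA(μ_0, μ_1). -/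
theorem dSGA_interp_eq {M d : ℕ} {S0 S1 : Type*} [MetricSpace S0] [MetricSpace S1]
    (f0 f1 : Fin M → EuclideanSpace ℝ (Fin d))
    (s0 : Fin M → S0) (s1 : Fin M → S1)
    (σ : Equiv.Perm (Fin M))
    (hopt : alignCostM f0 (fun i k => dist (s0 i) (s0 k))
        f1 (fun i k => dist (s1 i) (s1 k)) σ
      = dSGAM f0 (fun i k => dist (s0 i) (s0 k)) f1 (fun i k => dist (s1 i) (s1 k)))
    (μf : ℝ → Fin M → EuclideanSpace ℝ (Fin d))
    (μD : ℝ → Fin M → Fin M → ℝ)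
    (hμf : ∀ t i, μf t i = (1 - t) • f0 i + t • f1 (σ i))
    (hμD : ∀ t i k,
      μD t i k = (1 - t) * dist (s0 i) (s0 k) + t * dist (s1 (σ i)) (s1 (σ k)))
    (u t : ℝ) (hu : u ∈ Set.Icc (0:ℝ) 1) (ht : t ∈ Set.Icc (0:ℝ) 1) :
    dSGAM (μf u) (μD u) (μf t) (μD t)
      = |t - u| *
        dSGAM f0 (fun i k => dist (s0 i) (s0 k)) f1 (fun i k => dist (s1 i) (s1 k)) := by
  obtain rfl : μf = fun t i => (1 - t) • f0 i + t • f1 (σ i) := funext₂ hμf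
  obtain rfl : μD = fun t i k => (1 - t) * dist (s0 i) (s0 k) + t * dist (s1 (σ i)) (s1 (σ k)) :=
    funext₃ hμD
  set e := dSGAM f0 (fun i k => dist (s0 i) (s0 k)) f1 (fun i k => dist (s1 i) (s1 k))
  let ρ (p q : (Fin M → EuclideanSpace ℝ (Fin d)) × (Fin M → Fin M → ℝ)) := dSGAM p.1 p.2 q.1 q.2
  let γ (a : ℝ) := ((fun i => (1 - a) • f0 i + a • f1 (σ i)),
    fun i k => (1 - a) * dist (s0 i) (s0 k) + a * dist (s1 (σ i)) (s1 (σ k)))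
  have hends : ρ (γ 0) (γ 1) = e := by
    simp only [ρ, γ, sub_zero, sub_self, one_smul, zero_smul, add_zero, zero_add, one_mul,
      zero_mul]
    exact dSGAM_comp_perm f0 (fun i k => dist (s0 i) (s0 k)) f1
      (fun i k => dist (s1 i) (s1 k)) σ
  have hstep (a b : ℝ) : ρ (γ a) (γ b) ≤ |b - a| * e := by
    refine (dSGAM_le_alignCostM_s6 _ _ _ _ (Equiv.refl _)).trans_eq ?_
    rw [alignCostM_interp_refl, alignCostM_comp_perm f0 _ f1 (fun i k => dist (s1 i) (s1 k)),
      Equiv.refl_trans, hopt]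
  rw [← hends]
  exact eq_abs_sub_mul_of_le_abs_sub_mul ρ (fun _ _ => dSGAM_comm ..)
    (fun _ _ _ => dSGAM_triangle ..) γ (fun a _ b _ => hends ▸ hstep a b) hu ht
end
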